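/- arXiv:1604.01981 — 3 statements merged into one kernel-verified Lean document; each statement's English description precedes it below -/
import Mathlib

section
/- Let M be an n×n real matrix that is zero except in its last row, with last-row entries (m₁, ..., mₙ), mₙ ≠ 0, and suppose mₙ e^{mₙ} is in the domain where the scalar equation w e^w = mₙ has a solution w = W(mₙ). Define L = (W(mₙ)/mₙ) · M. Then L · exp(L) = M, i.e., L is a matrix Lambert W value of M. -/
/-!
Because only the last row of `M` is nonzero, `M * M = mₙ • M`, so `L = (w / mₙ) • M` satisfies
`L * L = w • L` and hence `L ^ (k + 1) = w ^ k • L`. Multiplying the exponential series of `L` by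
`L` therefore leaves the scalar series of `w`: `L * exp L = e ^ w • L = (w e ^ w / mₙ) • M = M`.
-/

open NormedSpace
open scoped Nat

theorem pow_succ_eq_smul_of_mul_self_eq_smul {R A : Type*} [CommSemiring R] [Semiring A]
    [Algebra R A] {a : A} {w : R} (h : a * a = w • a) (k : ℕ) : a ^ (k + 1) = w ^ k • a := by
  induction k with
  | zero => simp
  | succ k ih => rw [pow_succ, ih, smul_mul_assoc, h, smul_smul, pow_succ]

theorem mul_exp_eq_smul_of_mul_self_eq_smul {𝕂 𝔸 : Type*} [RCLike 𝕂] [NormedRing 𝔸]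
    [NormedAlgebra 𝕂 𝔸] [CompleteSpace 𝔸] {a : 𝔸} {w : 𝕂} (h : a * a = w • a) :
    a * exp a = exp w • a := by
  have hterm : ∀ k : ℕ, a * ((k !⁻¹ : 𝕂) • a ^ k) = ((k !⁻¹ : 𝕂) • w ^ k) • a := fun k => by
    rw [mul_smul_comm, ← pow_succ', pow_succ_eq_smul_of_mul_self_eq_smul h, smul_assoc]
  refine ((exp_series_hasSum_exp' (𝕂 := 𝕂) a).mul_left a).unique ?_
  simpa only [hterm] using (exp_series_hasSum_exp' (𝕂 := 𝕂) w).smul_const a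

theorem Matrix.mul_self_eq_smul_of_single_nonzero_row {ι R : Type*} [Fintype ι] [DecidableEq ι]
    [CommSemiring R] {M : Matrix ι ι R} (i : ι) (hM : ∀ k, k ≠ i → ∀ j, M k j = 0) :
    M * M = M i i • M := by
  ext k j
  rw [Matrix.mul_apply, Finset.sum_eq_single i (fun l _ hl => by rw [hM l hl, mul_zero])
    (by simp)]
  by_cases hk : k = i
  · subst hk; simp
  · simp [hM k hk]

/-- If `w e^w = mₙ`, then `L = (w/mₙ) • M` satisfies `L * exp L = M`. -/
theorem lastRowOnly_lambertW (n : ℕ) (M : Matrix (Fin (n + 1)) (Fin (n + 1)) ℝ)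
    (hM : ∀ i, i ≠ Fin.last n → ∀ j, M i j = 0)
    (hmn : M (Fin.last n) (Fin.last n) ≠ 0)
    (w : ℝ) (hw : w * Real.exp w = M (Fin.last n) (Fin.last n)) :
    ((w / M (Fin.last n) (Fin.last n)) • M) *
      exp ((w / M (Fin.last n) (Fin.last n)) • M) = M := by
  -- `exp` depends only on the topology, so any norm inducing the entrywise one will do.
  let _ : NormedRing (Matrix (Fin (n + 1)) (Fin (n + 1)) ℝ) := Matrix.linftyOpNormedRing
  let _ : NormedAlgebra ℝ (Matrix (Fin (n + 1)) (Fin (n + 1)) ℝ) := Matrix.linftyOpNormedAlgebra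
  set m := M (Fin.last n) (Fin.last n)
  have hMM : M * M = m • M := Matrix.mul_self_eq_smul_of_single_nonzero_row _ hM
  have hLL : ((w / m) • M) * ((w / m) • M) = w • ((w / m) • M) := by
    rw [smul_mul_smul_comm, hMM, smul_smul, smul_smul]
    congr 1
    field_simp
  calc _ = exp w • ((w / m) • M) := mul_exp_eq_smul_of_mul_self_eq_smul hLL
    _ = M := by
      rw [← Real.exp_eq_exp_ℝ, smul_smul, mul_div_assoc', mul_comm, hw, div_self hmn, one_smul]
end

section
/- Let A ∈ ℝ^{n×n} and b ∈ ℝ^n with the pair (A, b) controllable (the controllability matrix U = [b, Ab, ..., A^{n−1}b] is invertible). Let (Ā, b̄) be the controllable companion form with controllability matrix U_c, and set T = U U_c^{−1}. Then T is invertible, T^{−1} A T = Ā is in companion form, and T^{−1} b = b̄ = eₙ (the n-th standard basis vector). -/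
/-!
Let `p = X ^ (n + 1) + ∑ cₖ Xᵏ` be the characteristic polynomial of `A` and `C` its companion
matrix, with ones on the subdiagonal and last column `-c`; the matrix `Ā` is `Cᵀ`. Column `j` of
`A U` is `A ^ (j + 1) b`, so Cayley–Hamilton gives `A U = U C`, i.e. `U⁻¹ A U = C`. Hence `Ā` is
similar to `A`, has the same characteristic polynomial, and the same argument gives
`Ā U_c = U_c C`. Since `C ^ k e₀ = eₖ` for `k ≤ n`, the matrix `U_c` is the Hankel matrix
`(C ^ (i + j) e₀)ₙ`, which vanishes above the antidiagonal and is one on it, so it is invertible.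
Then `T⁻¹ A T = U_c C U_c⁻¹ = Ā` and `T⁻¹ b = U_c U⁻¹ U e₀ = U_c e₀ = b̄`.
-/

namespace Matrix

variable {R : Type*} [CommRing R] {m : Type*} [Fintype m] [DecidableEq m] {n : ℕ}

def krylov (k : ℕ) (M : Matrix m m R) (v : m → R) : Matrix m (Fin k) R :=
  of fun i j => (M ^ (j : ℕ) *ᵥ v) i

def companion (c : Fin (n + 1) → R) : Matrix (Fin (n + 1)) (Fin (n + 1)) R :=
  of fun i j => if j = Fin.last n then -c i else if (i : ℕ) = j + 1 then 1 else 0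

theorem krylov_mulVec_single (k : ℕ) (M : Matrix m m R) (v : m → R) (j : Fin k) :
    krylov k M v *ᵥ Pi.single j 1 = M ^ (j : ℕ) *ᵥ v := by
  ext i
  simp [krylov]

theorem krylov_mulVec_single_zero (k : ℕ) (M : Matrix m m R) (v : m → R) :
    krylov (k + 1) M v *ᵥ Pi.single 0 1 = v := by
  rw [krylov_mulVec_single, Fin.val_zero, pow_zero, one_mulVec]

theorem krylov_mulVec (k : ℕ) (M : Matrix m m R) (v : m → R) (w : Fin k → R) :
    krylov k M v *ᵥ w = ∑ j, w j • (M ^ (j : ℕ) *ᵥ v) := by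
  ext i
  simp [mulVec, dotProduct, krylov, mul_comm]

theorem companion_mulVec_single_castSucc (c : Fin (n + 1) → R) (j : Fin n) :
    companion c *ᵥ Pi.single j.castSucc 1 = Pi.single j.succ 1 := by
  ext i
  simp [companion, Pi.single_apply, Fin.ext_iff, j.isLt.ne]

theorem companion_mulVec_single_last (c : Fin (n + 1) → R) :
    companion c *ᵥ Pi.single (Fin.last n) 1 = -c := by
  ext i
  simp [companion]

theorem companion_pow_mulVec_single_zero (c : Fin (n + 1) → R) (k : Fin (n + 1)) :
    companion c ^ (k : ℕ) *ᵥ Pi.single 0 1 = Pi.single k 1 := by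
  induction k using Fin.induction with
  | zero => rw [Fin.val_zero, pow_zero, one_mulVec]
  | succ j ih =>
    rw [Fin.val_succ, pow_succ', ← mulVec_mulVec, ← Fin.val_castSucc, ih,
      companion_mulVec_single_castSucc]

theorem eq_transpose_companion (c : Fin (n + 1) → R)
    (M : Matrix (Fin (n + 1)) (Fin (n + 1)) R)
    (h_sup : ∀ i : Fin (n + 1), i ≠ Fin.last n →
      ∀ j : Fin (n + 1), M i j = if (j : ℕ) = (i : ℕ) + 1 then 1 else 0)
    (h_last : ∀ j, M (Fin.last n) j = -c j) :
    M = (companion c)ᵀ := by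
  ext i j
  by_cases hi : i = Fin.last n
  · subst hi
    simp [companion, h_last]
  · simp [companion, hi, h_sup i hi]

theorem mul_krylov_eq_krylov_mul_companion_of_pow_mulVec (c : Fin (n + 1) → R)
    (M : Matrix m m R) (v : m → R)
    (h : M ^ (n + 1) *ᵥ v = -∑ k, c k • (M ^ (k : ℕ) *ᵥ v)) :
    M * krylov (n + 1) M v = krylov (n + 1) M v * companion c := by
  refine ext_of_mulVec_single fun j => ?_
  rw [← mulVec_mulVec, ← mulVec_mulVec, krylov_mulVec_single, mulVec_mulVec, ← pow_succ']
  induction j using Fin.lastCases with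
  | last => rw [companion_mulVec_single_last, mulVec_neg, krylov_mulVec, Fin.val_last, h]
  | cast j => rw [companion_mulVec_single_castSucc, krylov_mulVec_single, Fin.val_succ,
      Fin.val_castSucc]

theorem pow_eq_neg_sum_charpoly_coeff (M : Matrix (Fin (n + 1)) (Fin (n + 1)) R) :
    M ^ (n + 1) = -∑ k : Fin (n + 1), M.charpoly.coeff k • M ^ (k : ℕ) := by
  nontriviality R
  have hdeg : M.charpoly.natDegree = n + 1 := by simp
  have hlead : M.charpoly.coeff (n + 1) = 1 := by
    simpa [hdeg] using M.charpoly_monic.coeff_natDegree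
  have h := M.aeval_self_charpoly
  rw [Polynomial.aeval_eq_sum_range, hdeg, Finset.sum_range_succ, hlead, one_smul,
    ← Fin.sum_univ_eq_sum_range (fun k => M.charpoly.coeff k • M ^ k)] at h
  exact eq_neg_of_add_eq_zero_right h

theorem mul_krylov_eq_krylov_mul_companion (M : Matrix (Fin (n + 1)) (Fin (n + 1)) R)
    (v : Fin (n + 1) → R) :
    M * krylov (n + 1) M v = krylov (n + 1) M v * companion fun k => M.charpoly.coeff k := by
  refine mul_krylov_eq_krylov_mul_companion_of_pow_mulVec _ M v ?_
  simp only [pow_eq_neg_sum_charpoly_coeff M, neg_mulVec, sum_mulVec, smul_mulVec]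

theorem isUnit_det_hankel (h : ℕ → R) (h_lt : ∀ k < n, h k = 0) (h_eq : h n = 1) :
    IsUnit (of fun i j : Fin (n + 1) => h (i + j)).det := by
  set H : Matrix (Fin (n + 1)) (Fin (n + 1)) R := of fun i j => h (i + j)
  have hrev : (H.submatrix id Fin.revPerm).det = 1 := by
    rw [det_of_isLowerTriangular]
    · exact Finset.prod_eq_one fun i _ => by
        simp [H, Fin.val_rev, Nat.add_sub_cancel' (Fin.is_le i), h_eq]
    · intro i j hij
      simp only [H, submatrix_apply, of_apply, id_eq, Fin.revPerm_apply, Fin.val_rev]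
      exact h_lt _ (by change (i : ℕ) < j at hij; omega)
  rw [det_permute'] at hrev
  exact IsUnit.of_mul_eq_one_right _ hrev

theorem krylov_transpose_companion_single_last (c : Fin (n + 1) → R) :
    krylov (n + 1) (companion c)ᵀ (Pi.single (Fin.last n) 1) =
      of fun i j : Fin (n + 1) =>
        (companion c ^ ((i : ℕ) + j) *ᵥ Pi.single 0 1) (Fin.last n) := by
  ext i j
  rw [krylov, of_apply, of_apply, ← transpose_pow, mulVec_single_one, add_comm (i : ℕ), pow_add,
    ← mulVec_mulVec, companion_pow_mulVec_single_zero, mulVec_single_one]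
  rfl

theorem isUnit_det_krylov_transpose_companion (c : Fin (n + 1) → R) :
    IsUnit (krylov (n + 1) (companion c)ᵀ (Pi.single (Fin.last n) 1)).det := by
  rw [krylov_transpose_companion_single_last]
  refine isUnit_det_hankel (fun k => (companion c ^ k *ᵥ Pi.single 0 1) (Fin.last n))
    (fun k hk => ?_) ?_
  · rw [companion_pow_mulVec_single_zero c ⟨k, by omega⟩]
    exact Pi.single_eq_of_ne (by simp [Fin.ext_iff]; omega) _
  · simpa using congrFun (companion_pow_mulVec_single_zero c (Fin.last n)) (Fin.last n)

end Matrix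

open Matrix in
/-- If `(A, b)` is controllable, `(Ā, b̄)` is its controllable companion form with
controllability matrix `U_c`, and `T = U U_c⁻¹`, then `T` is invertible,
`T⁻¹ A T = Ā`, and `T⁻¹ b = b̄ = eₙ`. -/
theorem companion_transformation (n : ℕ) (A : Matrix (Fin (n + 1)) (Fin (n + 1)) ℝ)
    (b : Fin (n + 1) → ℝ)
    (U : Matrix (Fin (n + 1)) (Fin (n + 1)) ℝ)
    (hU : ∀ i j, U i j = (A ^ (j : ℕ)).mulVec b i)
    (hctrb : IsUnit U.det)
    (Abar : Matrix (Fin (n + 1)) (Fin (n + 1)) ℝ)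
    (hAbar_sup : ∀ i : Fin (n + 1), i ≠ Fin.last n →
      ∀ j : Fin (n + 1), Abar i j = if (j : ℕ) = (i : ℕ) + 1 then 1 else 0)
    (hAbar_last : ∀ j : Fin (n + 1),
      Abar (Fin.last n) j = -A.charpoly.coeff (j : ℕ))
    (bbar : Fin (n + 1) → ℝ) (hbbar : bbar = Pi.single (Fin.last n) 1)
    (Uc : Matrix (Fin (n + 1)) (Fin (n + 1)) ℝ)
    (hUc : ∀ i j, Uc i j = (Abar ^ (j : ℕ)).mulVec bbar i)
    (T : Matrix (Fin (n + 1)) (Fin (n + 1)) ℝ) (hT : T = U * Uc⁻¹) :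
    IsUnit T.det ∧ T⁻¹ * A * T = Abar ∧ T⁻¹.mulVec b = bbar := by
  set C := companion fun k : Fin (n + 1) => A.charpoly.coeff k
  replace hU : U = krylov (n + 1) A b := Matrix.ext hU
  replace hUc : Uc = krylov (n + 1) Abar bbar := Matrix.ext hUc
  have hAbar : Abar = Cᵀ := eq_transpose_companion _ Abar hAbar_sup hAbar_last
  have hUc_det : IsUnit Uc.det := by
    rw [hUc, hAbar, hbbar]
    exact isUnit_det_krylov_transpose_companion _
  have hUC : U⁻¹ * A * U = C := by
    rw [mul_assoc, hU, mul_krylov_eq_krylov_mul_companion, ← mul_assoc, ← hU,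
      nonsing_inv_mul _ hctrb, one_mul]
  have hcharpoly : Abar.charpoly = A.charpoly := by
    rw [hAbar, charpoly_transpose, ← hUC, mul_assoc, charpoly_mul_comm,
      mul_nonsing_inv_cancel_right _ _ hctrb]
  have hUcC : Uc * C * Uc⁻¹ = Abar := by
    have hAbarUc := mul_krylov_eq_krylov_mul_companion Abar bbar
    rw [hcharpoly, ← hUc] at hAbarUc
    rw [← hAbarUc, mul_nonsing_inv_cancel_right _ _ hUc_det]
  have hT_inv : T⁻¹ = Uc * U⁻¹ := by
    rw [hT, Matrix.mul_inv_rev, nonsing_inv_nonsing_inv _ hUc_det]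
  refine ⟨?_, ?_, ?_⟩
  · rw [hT, det_mul]
    exact hctrb.mul (isUnit_nonsing_inv_det _ hUc_det)
  · rw [hT_inv, hT, ← hUcC, ← hUC]
    simp only [mul_assoc]
  · have hb : U *ᵥ Pi.single 0 1 = b := hU ▸ krylov_mulVec_single_zero n A b
    rw [hT_inv, ← hb, mulVec_mulVec, nonsing_inv_mul_cancel_right _ _ hctrb, hUc,
      krylov_mulVec_single_zero]
end

section
/- If −1/e ≤ a_d h e^{−ah} < 0 for reals a, a_d and h > 0, then the scalar delay characteristic equation λ − a − a_d e^{−λh} = 0 has exactly two real roots (counted with multiplicity one each when a_d h e^{−ah} > −1/e), given by λ = a + W₀(a_d h e^{−ah})/h and λ = a + W₋₁(a_d h e^{−ah})/h. -/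
/-!
Substituting `w = h (λ - a)` turns the characteristic equation into `w e^w = z` with
`z = a_d h e^{-a h}`. The map `w ↦ w e^w` decreases strictly on `(-∞, -1]` and increases strictly
on `[-1, ∞)`, with minimum `-1/e` at `-1`, and `w e^w ≥ 2 / w` for `w < 0`; so for `-1/e ≤ z < 0` the
intermediate value theorem gives one solution on each side of `-1`, and strict monotonicity shows
there are no others. The two solutions coincide only when both equal `-1`, i.e. when `z = -1/e`.
-/

open Real Set

theorem hasDerivAt_mul_exp (x : ℝ) :
    HasDerivAt (fun w : ℝ => w * exp w) ((1 + x) * exp x) x := by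
  have h : HasDerivAt (fun w : ℝ => w * exp w) (1 * exp x + x * exp x) x :=
    (hasDerivAt_id x).mul (hasDerivAt_exp x)
  convert h using 1; ring

theorem continuous_mul_exp : Continuous (fun w : ℝ => w * exp w) :=
  continuous_id.mul continuous_exp

theorem strictMonoOn_mul_exp : StrictMonoOn (fun w : ℝ => w * exp w) (Ici (-1)) := by
  refine strictMonoOn_of_deriv_pos (convex_Ici _) continuous_mul_exp.continuousOn fun x hx => ?_
  rw [interior_Ici, mem_Ioi] at hx
  rw [(hasDerivAt_mul_exp x).deriv]
  exact mul_pos (by linarith) (exp_pos x)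

theorem strictAntiOn_mul_exp : StrictAntiOn (fun w : ℝ => w * exp w) (Iic (-1)) := by
  refine strictAntiOn_of_deriv_neg (convex_Iic _) continuous_mul_exp.continuousOn fun x hx => ?_
  rw [interior_Iic, mem_Iio] at hx
  rw [(hasDerivAt_mul_exp x).deriv]
  exact mul_neg_of_neg_of_pos (by linarith) (exp_pos x)

theorem neg_one_mul_exp_neg_one : -1 * exp (-1) = -(exp 1)⁻¹ := by
  rw [exp_neg, neg_one_mul]

theorem two_div_le_mul_exp {w : ℝ} (hw : w < 0) : 2 / w ≤ w * exp w := by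
  have hquad : w ^ 2 / 2 ≤ exp (-w) := by
    simpa using pow_div_factorial_le_exp (x := -w) (neg_nonneg.mpr hw.le) 2
  have hinv : exp (-w) * exp w = 1 := by rw [← exp_add, neg_add_cancel, exp_zero]
  rw [div_le_iff_of_neg hw]
  nlinarith [exp_pos w]

theorem exists_mem_Icc_mul_exp_eq {z : ℝ} (hz₁ : -(exp 1)⁻¹ ≤ z) (hz₂ : z ≤ 0) :
    ∃ w ∈ Icc (-1 : ℝ) 0, w * exp w = z :=
  intermediate_value_Icc (by norm_num) continuous_mul_exp.continuousOn
    ⟨by rwa [neg_one_mul_exp_neg_one], by rwa [zero_mul]⟩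

theorem exists_le_neg_one_mul_exp_eq {z : ℝ} (hz₁ : -(exp 1)⁻¹ ≤ z) (hz₂ : z < 0) :
    ∃ w ≤ -1, w * exp w = z := by
  have hinv : (exp 1)⁻¹ < 1 := inv_lt_one_of_one_lt₀ (one_lt_exp_iff.mpr one_pos)
  have hM : 2 / z < -1 := by
    rw [div_lt_iff_of_neg hz₂]
    linarith
  have hfM : z ≤ 2 / z * exp (2 / z) := by
    simpa [div_div_eq_mul_div, hz₂.ne] using two_div_le_mul_exp (hM.trans (by norm_num))
  obtain ⟨w, hw, hwz⟩ := intermediate_value_Icc' hM.le continuous_mul_exp.continuousOn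
    ⟨by rwa [neg_one_mul_exp_neg_one], hfM⟩
  exact ⟨w, hw.2, hwz⟩

theorem mul_exp_eq_iff {w₀ w₁ z : ℝ} (h₀ : -1 ≤ w₀) (h₁ : w₁ ≤ -1)
    (hw₀ : w₀ * exp w₀ = z) (hw₁ : w₁ * exp w₁ = z) (w : ℝ) :
    w * exp w = z ↔ w = w₀ ∨ w = w₁ := by
  refine ⟨fun hw => ?_, by rintro (rfl | rfl) <;> assumption⟩
  rcases le_total (-1) w with hle | hle
  · exact .inl (strictMonoOn_mul_exp.injOn hle h₀ (hw.trans hw₀.symm))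
  · exact .inr (strictAntiOn_mul_exp.injOn hle h₁ (hw.trans hw₁.symm))

theorem sub_sub_mul_exp_eq_zero_iff {a ad h : ℝ} (hh : h ≠ 0) (lam : ℝ) :
    lam - a - ad * exp (-lam * h) = 0 ↔
      h * (lam - a) * exp (h * (lam - a)) = ad * h * exp (-a * h) := by
  have hexp : exp (h * (lam - a)) * exp (-lam * h) = exp (-a * h) := by
    rw [← exp_add]; ring_nf
  have hfactor : h * (lam - a) * exp (h * (lam - a)) - ad * h * exp (-a * h) =
      h * exp (h * (lam - a)) * (lam - a - ad * exp (-lam * h)) := by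
    rw [← hexp]; ring
  rw [← sub_eq_zero (a := h * (lam - a) * _), hfactor, mul_eq_zero,
    or_iff_right (mul_ne_zero hh (exp_pos _).ne')]

theorem mul_sub_eq_iff_eq_add_div {a h w : ℝ} (hh : h ≠ 0) (lam : ℝ) :
    h * (lam - a) = w ↔ lam = a + w / h := by
  rw [← sub_eq_iff_eq_add', eq_div_iff hh, mul_comm]

/-- If `-1/e ≤ a_d h e^{-a h} < 0`, the scalar delay characteristic equation has
exactly two real roots, `a + W₀(a_d h e^{-a h})/h` and `a + W₋₁(a_d h e^{-a h})/h`,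
distinct when `a_d h e^{-a h} > -1/e`. -/
theorem scalar_delay_two_real_roots (a ad h : ℝ) (hh : 0 < h)
    (hz₁ : -(Real.exp 1)⁻¹ ≤ ad * h * Real.exp (-a * h))
    (hz₂ : ad * h * Real.exp (-a * h) < 0) :
    ∃ w₀ w₁ : ℝ,
      w₀ * Real.exp w₀ = ad * h * Real.exp (-a * h) ∧
      w₁ * Real.exp w₁ = ad * h * Real.exp (-a * h) ∧
      -1 ≤ w₀ ∧ w₁ ≤ -1 ∧
      (∀ lam : ℝ, lam - a - ad * Real.exp (-lam * h) = 0 ↔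
        lam = a + w₀ / h ∨ lam = a + w₁ / h) ∧
      (-(Real.exp 1)⁻¹ < ad * h * Real.exp (-a * h) → a + w₀ / h ≠ a + w₁ / h) := by
  obtain ⟨w₀, ⟨hw₀, -⟩, hw₀z⟩ := exists_mem_Icc_mul_exp_eq hz₁ hz₂.le
  obtain ⟨w₁, hw₁, hw₁z⟩ := exists_le_neg_one_mul_exp_eq hz₁ hz₂
  refine ⟨w₀, w₁, hw₀z, hw₁z, hw₀, hw₁, fun lam => ?_, fun hgt heq => ?_⟩
  · rw [sub_sub_mul_exp_eq_zero_iff hh.ne', mul_exp_eq_iff hw₀ hw₁ hw₀z hw₁z,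
      mul_sub_eq_iff_eq_add_div hh.ne', mul_sub_eq_iff_eq_add_div hh.ne']
  · have hw : w₀ = w₁ := by
      rwa [add_right_inj, div_left_inj' hh.ne'] at heq
    have hw₀_eq : w₀ = -1 := le_antisymm (hw ▸ hw₁) hw₀
    rw [← hw₀z, hw₀_eq, neg_one_mul_exp_neg_one] at hgt
    exact lt_irrefl _ hgt
end
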